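/- For every f ∈ 𝒞 and every k ∈ ℕ, the seminorm of the second multiple commutator tends to zero: p_{f,k}([X_L, a]_2) → 0 as L → ∞, where X_L := a Q_L + a† Q_{L−1} and [X_L, a]_2 = a³ Π_{L+1} + a² a† (Π_L + Π_{L+1}) − 2 a Π_{L+1} − a (a†)² Π_{L−1}. -/

import Mathlib

open Filter Topology
open scoped ENNReal

noncomputable section

/-- The boson Hilbert space `H = ℓ²(ℕ, ℂ)`. -/
abbrev Hb : Type := lp (fun _ : ℕ => ℂ) 2

/-- The standard orthonormal basis vectors `e n` of `H`. -/
def eb (n : ℕ) : Hb := lp.single 2 n (1 : ℂ)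

/-- The dense subspace `D` of finitely supported linear combinations of the `e n`,
modelled as finitely supported sequences. -/
abbrev Db : Type := ℕ →₀ ℂ

/-- The inclusion `D → H`. -/
def incl : Db →ₗ[ℂ] Hb := Finsupp.linearCombination ℂ eb

/-- The annihilation operator `a : D → D`, `a e₀ = 0`, `a eₙ = √n e_{n-1}`. -/
def aOp : Db →ₗ[ℂ] Db :=
  Finsupp.lsum ℂ fun n => (Real.sqrt n : ℂ) • Finsupp.lsingle (n - 1)

/-- The creation operator `a† : D → D`, `a† eₙ = √(n+1) e_{n+1}`. -/
def adOp : Db →ₗ[ℂ] Db :=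
  Finsupp.lsum ℂ fun n => (Real.sqrt (n + 1) : ℂ) • Finsupp.lsingle (n + 1)

/-- The number operator `N = a† a` on `D`. -/
def ND : Db →ₗ[ℂ] Db := adOp ∘ₗ aOp

/-- The projection `Π_l` restricted to `D`. -/
def PiD (l : ℕ) : Db →ₗ[ℂ] Db :=
  Finsupp.lsum ℂ fun n => if n = l then Finsupp.lsingle n else 0

/-- `Q_L = Σ_{l=0}^L Π_l` on `D`. -/
def QD (L : ℕ) : Db →ₗ[ℂ] Db := ∑ l ∈ Finset.range (L + 1), PiD l

/-- The orthogonal projection `Π_l` of `H` onto `ℂ e_l`. -/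
def PiH (l : ℕ) : Hb →L[ℂ] Hb := (innerSL ℂ (eb l)).smulRight (eb l)

/-- `Q_L = Σ_{l=0}^L Π_l` on `H`. -/
def QH (L : ℕ) : Hb →L[ℂ] Hb := ∑ l ∈ Finset.range (L + 1), PiH l

/-- For a linear map `T : D → H`, the bounded operator `Π_l T Π_s` on `H`
(it is `x ↦ ⟪e_s, x⟫ • Π_l (T e_s)`, of rank at most one). -/
def sandwich (T : Db →ₗ[ℂ] Hb) (l s : ℕ) : Hb →L[ℂ] Hb :=
  (innerSL ℂ (eb s)).smulRight (PiH l (T (Finsupp.single s 1)))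

/-- Membership in the set `𝒞` of positive, bounded, continuous functions on `[0,∞)`
decreasing faster than any inverse power. -/
structure IsC (f : ℝ → ℝ) : Prop where
  cont : ContinuousOn f (Set.Ici (0 : ℝ))
  bdd : ∃ B : ℝ, ∀ x ∈ Set.Ici (0 : ℝ), f x ≤ B
  pos : ∀ x ∈ Set.Ici (0 : ℝ), 0 < f x
  decay : ∀ n : ℕ, Tendsto (fun x : ℝ => x ^ n * f x) atTop (nhds 0)

/-- The seminorm `p_{f,k}(T) = Σ_{l,s} f(l) s^k ‖Π_l T Π_s‖ ∈ [0,∞]`. -/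
def semin (f : ℝ → ℝ) (k : ℕ) (T : Db →ₗ[ℂ] Hb) : ℝ≥0∞ :=
  ∑' (l : ℕ) (s : ℕ), ENNReal.ofReal (f l * (s : ℝ) ^ k * ‖sandwich T l s‖)

end

noncomputable section

/-- Iterated commutator of linear maps on `D`: `[X,Y]₀ = Y`, `[X,Y]ₘ = X[X,Y]_{m-1} - [X,Y]_{m-1}X`. -/
def itComm (X Y : Db →ₗ[ℂ] Db) : ℕ → Db →ₗ[ℂ] Db
  | 0 => Y
  | m + 1 => X * itComm X Y m - itComm X Y m * X

lemma aOp_single (n : ℕ) (c : ℂ) :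
    aOp (Finsupp.single n c) = (Real.sqrt n : ℂ) • Finsupp.single (n - 1) c := by
  simp [aOp, Finsupp.smul_single]

lemma adOp_single (n : ℕ) (c : ℂ) :
    adOp (Finsupp.single n c) = (Real.sqrt (n + 1) : ℂ) • Finsupp.single (n + 1) c := by
  simp [adOp, Finsupp.smul_single]

lemma PiD_single (l n : ℕ) (c : ℂ) :
    PiD l (Finsupp.single n c) = if n = l then Finsupp.single n c else 0 := by
  simp [PiD]
  split_ifs <;> simp

lemma QD_single (L n : ℕ) (c : ℂ) :
    QD L (Finsupp.single n c) = if n ≤ L then Finsupp.single n c else 0 := by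
  simp only [QD, LinearMap.sum_apply, PiD_single]
  rw [Finset.sum_ite_eq (Finset.range (L+1)) n (fun _ => Finsupp.single n c)]
  simp [Nat.lt_succ_iff]

lemma incl_single (n : ℕ) (c : ℂ) : incl (Finsupp.single n c) = c • eb n := by
  simp [incl]

lemma sqmulC (x : ℝ) (hx : 0 ≤ x) :
    (Real.sqrt x : ℂ) * (Real.sqrt x : ℂ) = (x : ℂ) := by
  rw [← Complex.ofReal_mul, Real.mul_self_sqrt hx]

lemma X2_single (m n : ℕ) (c : ℂ) :
    (aOp * QD (m + 2) + adOp * QD (m + 1)) (Finsupp.single n c) =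
      (if n ≤ m + 2 then (Real.sqrt n : ℂ) • Finsupp.single (n - 1) c else 0) +
      (if n ≤ m + 1 then (Real.sqrt (n + 1) : ℂ) • Finsupp.single (n + 1) c else 0) := by
  simp only [LinearMap.add_apply, Module.End.mul_apply, QD_single]
  split_ifs <;> simp [aOp_single, adOp_single]

lemma c1_low (m s : ℕ) (hs : s ≤ m + 1) :
    itComm (aOp * QD (m+2) + adOp * QD (m+1)) aOp 1 (Finsupp.single s 1) =
      -(Finsupp.single s 1) := by
  simp only [itComm, LinearMap.sub_apply, Module.End.mul_apply]
  rcases s with _ | t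
  · rw [aOp_single, X2_single]
    rw [if_pos (by omega), if_pos (by omega)]
    simp only [map_add, map_smul, aOp_single, Nat.cast_zero, Real.sqrt_zero,
      Complex.ofReal_zero, zero_smul, smul_smul, map_zero]
    norm_num
  · rw [aOp_single, map_smul, X2_single, X2_single,
      if_pos (by omega), if_pos (by omega), if_pos (by omega), if_pos (by omega)]
    simp only [Nat.succ_sub_one, map_add, map_smul, aOp_single, smul_add, smul_smul]
    ext j
    simp only [Finsupp.add_apply, Finsupp.sub_apply, Finsupp.neg_apply, Finsupp.smul_apply,
      Finsupp.single_apply, smul_eq_mul]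
    split_ifs <;> try omega
    all_goals push_cast
    all_goals try (rw [sqmulC _ (by positivity), sqmulC _ (by positivity)]; push_cast; ring)
    all_goals ring

lemma c1_L (m : ℕ) :
    itComm (aOp * QD (m+2) + adOp * QD (m+1)) aOp 1 (Finsupp.single (m+2) 1) =
      ((m + 2 : ℝ) : ℂ) • Finsupp.single (m+2) 1 := by
  simp only [itComm, LinearMap.sub_apply, Module.End.mul_apply]
  rw [aOp_single, map_smul, X2_single, X2_single,
    if_pos (by omega), if_pos (by omega), if_pos (by omega), if_neg (by omega)]
  simp only [Nat.add_sub_cancel, Nat.succ_sub_one, map_add, map_smul, aOp_single,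
    smul_add, smul_smul, add_zero]
  ext j
  simp only [Finsupp.add_apply, Finsupp.sub_apply, Finsupp.smul_apply,
    Finsupp.single_apply, smul_eq_mul]
  split_ifs <;> try omega
  all_goals push_cast
  all_goals simp only [show ((m:ℝ)+1+1) = ((m:ℝ)+2) from by ring]
  all_goals try rw [sqmulC _ (by positivity)]
  all_goals push_cast
  all_goals ring

lemma c1_Lp1 (m : ℕ) :
    itComm (aOp * QD (m+2) + adOp * QD (m+1)) aOp 1 (Finsupp.single (m+3) 1) =
      ((Real.sqrt (m+3) * Real.sqrt (m+2) : ℝ) : ℂ) • Finsupp.single (m+1) 1 := by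
  simp only [itComm, LinearMap.sub_apply, Module.End.mul_apply]
  rw [aOp_single, map_smul, X2_single, X2_single,
    if_pos (by omega), if_neg (by omega), if_neg (by omega), if_neg (by omega)]
  simp only [Nat.add_sub_cancel, map_add, map_zero, map_smul, smul_add, smul_smul,
    add_zero, zero_add, sub_zero, smul_zero]
  push_cast
  ring_nf

lemma c1_high (m s : ℕ) (hs : m + 4 ≤ s) :
    itComm (aOp * QD (m+2) + adOp * QD (m+1)) aOp 1 (Finsupp.single s 1) = 0 := by
  simp only [itComm, LinearMap.sub_apply, Module.End.mul_apply]
  rw [aOp_single, map_smul, X2_single, X2_single,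
    if_neg (by omega), if_neg (by omega), if_neg (by omega), if_neg (by omega)]
  simp

lemma itComm_two (X : Db →ₗ[ℂ] Db) :
    itComm X aOp 2 = X * itComm X aOp 1 - itComm X aOp 1 * X := rfl

lemma c2_low (m s : ℕ) (hs : s ≤ m) :
    itComm (aOp * QD (m+2) + adOp * QD (m+1)) aOp 2 (Finsupp.single s 1) = 0 := by
  rw [itComm_two]
  simp only [LinearMap.sub_apply, Module.End.mul_apply]
  rw [c1_low m s (by omega), map_neg, X2_single, if_pos (by omega), if_pos (by omega),
    map_add, map_smul, map_smul, c1_low m (s-1) (by omega), c1_low m (s+1) (by omega)]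
  simp [smul_neg]
  abel

lemma c2_m1 (m : ℕ) :
    itComm (aOp * QD (m+2) + adOp * QD (m+1)) aOp 2 (Finsupp.single (m+1) 1) =
      ((-(m+3) * Real.sqrt (m+2) : ℝ) : ℂ) • Finsupp.single (m+2) 1 := by
  rw [itComm_two]
  simp only [LinearMap.sub_apply, Module.End.mul_apply]
  rw [c1_low m (m+1) (by omega), X2_single, if_pos (by omega), if_pos (by omega),
    map_add, map_smul, map_smul, map_neg, X2_single, if_pos (by omega), if_pos (by omega)]
  rw [show m + 1 - 1 = m from rfl, c1_low m m (by omega), c1_L m]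
  ext j
  simp only [Finsupp.add_apply, Finsupp.sub_apply, Finsupp.neg_apply, Finsupp.smul_apply,
    Finsupp.single_apply, smul_eq_mul]
  split_ifs <;> try omega
  all_goals push_cast
  all_goals ring

lemma c2_m2 (m : ℕ) :
    itComm (aOp * QD (m+2) + adOp * QD (m+1)) aOp 2 (Finsupp.single (m+2) 1) =
      (((m+3) * Real.sqrt (m+2) : ℝ) : ℂ) • Finsupp.single (m+1) 1 := by
  rw [itComm_two]
  simp only [LinearMap.sub_apply, Module.End.mul_apply]
  rw [c1_L m, map_smul, X2_single, if_pos (by omega), if_neg (by omega), add_zero]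
  rw [show m + 2 - 1 = m + 1 from rfl, map_smul, c1_low m (m+1) (by omega)]
  ext j
  simp only [Finsupp.add_apply, Finsupp.sub_apply, Finsupp.neg_apply, Finsupp.smul_apply,
    Finsupp.single_apply, smul_eq_mul]
  split_ifs <;> try omega
  all_goals push_cast
  all_goals ring

lemma c2_m3 (m : ℕ) :
    itComm (aOp * QD (m+2) + adOp * QD (m+1)) aOp 2 (Finsupp.single (m+3) 1) =
      ((Real.sqrt (m+3) * Real.sqrt (m+2) * Real.sqrt (m+1) : ℝ) : ℂ) • Finsupp.single m 1 +
      ((Real.sqrt (m+3) * Real.sqrt (m+2) * Real.sqrt (m+2) : ℝ) : ℂ) • Finsupp.single (m+2) 1 := by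
  rw [itComm_two]
  simp only [LinearMap.sub_apply, Module.End.mul_apply]
  rw [c1_Lp1 m, X2_single, if_neg (by omega), if_neg (by omega), map_smul, X2_single,
    if_pos (by omega), if_pos (by omega)]
  rw [show m + 1 - 1 = m from rfl, add_zero, map_zero, sub_zero]
  ext j
  simp only [Finsupp.add_apply, Finsupp.smul_apply, Finsupp.single_apply, smul_eq_mul]
  split_ifs <;> try omega
  all_goals push_cast
  all_goals ring

lemma c2_high (m s : ℕ) (hs : m + 4 ≤ s) :
    itComm (aOp * QD (m+2) + adOp * QD (m+1)) aOp 2 (Finsupp.single s 1) = 0 := by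
  rw [itComm_two]
  simp only [LinearMap.sub_apply, Module.End.mul_apply]
  rw [c1_high m s hs, X2_single, if_neg (by omega), if_neg (by omega)]
  simp

lemma norm_eb (n : ℕ) : ‖eb n‖ = 1 := by
  have := lp.norm_single (p := 2) (E := fun _ : ℕ => ℂ) (by norm_num) n (1:ℂ)
  simpa [eb] using this

lemma PiH_eb (l t : ℕ) : PiH l (eb t) = if l = t then eb l else 0 := by
  rcases eq_or_ne l t with h | h
  · subst h
    simp [PiH, eb, lp.inner_single_left, lp.single_apply_self]
  · simp [PiH, eb, lp.inner_single_left, h]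

lemma norm_smulRight_eb (s : ℕ) (v : Hb) :
    ‖(innerSL ℂ (eb s)).smulRight v‖ = ‖v‖ := by
  rw [ContinuousLinearMap.norm_smulRight_apply, innerSL_apply_norm, norm_eb, one_mul]

lemma sandwich_zero_of (T : Db →ₗ[ℂ] Hb) (l s : ℕ) (h : PiH l (T (Finsupp.single s 1)) = 0) :
    sandwich T l s = 0 := by
  rw [sandwich, h]
  ext x
  simp

lemma norm_sandwich_zero (T : Db →ₗ[ℂ] Hb) (l s : ℕ) (h : T (Finsupp.single s 1) = 0) :
    sandwich T l s = 0 :=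
  sandwich_zero_of T l s (by rw [h, map_zero])

/-- The operator in question, at cutoff `L = m + 2`. -/
def TT (m : ℕ) : Db →ₗ[ℂ] Hb :=
  incl ∘ₗ itComm (aOp * QD (m+2) + adOp * QD (m+1)) aOp 2

lemma TT_low (m s : ℕ) (hs : s ≤ m) : TT m (Finsupp.single s 1) = 0 := by
  rw [TT, LinearMap.comp_apply, c2_low m s hs, map_zero]

lemma TT_high (m s : ℕ) (hs : m + 4 ≤ s) : TT m (Finsupp.single s 1) = 0 := by
  rw [TT, LinearMap.comp_apply, c2_high m s hs, map_zero]

lemma TT_1 (m : ℕ) : TT m (Finsupp.single (m+1) 1) =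
    ((-(m+3) * Real.sqrt (m+2) : ℝ) : ℂ) • eb (m+2) := by
  rw [TT, LinearMap.comp_apply, c2_m1 m, map_smul, incl_single, smul_smul, mul_one]

lemma TT_2 (m : ℕ) : TT m (Finsupp.single (m+2) 1) =
    (((m+3) * Real.sqrt (m+2) : ℝ) : ℂ) • eb (m+1) := by
  rw [TT, LinearMap.comp_apply, c2_m2 m, map_smul, incl_single, smul_smul, mul_one]

lemma TT_3 (m : ℕ) : TT m (Finsupp.single (m+3) 1) =
    ((Real.sqrt (m+3) * Real.sqrt (m+2) * Real.sqrt (m+1) : ℝ) : ℂ) • eb m +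
    ((Real.sqrt (m+3) * Real.sqrt (m+2) * Real.sqrt (m+2) : ℝ) : ℂ) • eb (m+2) := by
  rw [TT, LinearMap.comp_apply, c2_m3 m, map_add, map_smul, map_smul, incl_single,
    incl_single, smul_smul, smul_smul, mul_one, mul_one]

lemma sandwich_norm_of_PiH (T : Db →ₗ[ℂ] Hb) (l s : ℕ) (c : ℂ)
    (h : PiH l (T (Finsupp.single s 1)) = c • eb l) :
    ‖sandwich T l s‖ = ‖c‖ := by
  rw [sandwich, h, norm_smulRight_eb, norm_smul, norm_eb, mul_one]

lemma sandw_1 (m l : ℕ) :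
    sandwich (TT m) l (m+1) =
      if l = m + 2 then sandwich (TT m) l (m+1) else 0 := by
  split_ifs with h
  · rfl
  · exact sandwich_zero_of _ _ _ (by rw [TT_1, map_smul, PiH_eb, if_neg h, smul_zero])

lemma norm_sandw_1 (m : ℕ) :
    ‖sandwich (TT m) (m+2) (m+1)‖ = (m+3) * Real.sqrt (m+2) := by
  rw [sandwich_norm_of_PiH _ _ _ _ (by rw [TT_1, map_smul, PiH_eb, if_pos rfl])]
  rw [Complex.norm_real, Real.norm_eq_abs, abs_mul, abs_neg,
    abs_of_nonneg (by positivity), abs_of_nonneg (Real.sqrt_nonneg _)]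

lemma sandw_2 (m l : ℕ) (h : l ≠ m + 1) : sandwich (TT m) l (m+2) = 0 :=
  sandwich_zero_of _ _ _ (by rw [TT_2, map_smul, PiH_eb, if_neg h, smul_zero])

lemma norm_sandw_2 (m : ℕ) :
    ‖sandwich (TT m) (m+1) (m+2)‖ = (m+3) * Real.sqrt (m+2) := by
  rw [sandwich_norm_of_PiH _ _ _ _ (by rw [TT_2, map_smul, PiH_eb, if_pos rfl])]
  rw [Complex.norm_real, Real.norm_eq_abs, abs_mul,
    abs_of_nonneg (by positivity), abs_of_nonneg (Real.sqrt_nonneg _)]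

lemma sandw_3 (m l : ℕ) (h1 : l ≠ m) (h2 : l ≠ m + 2) : sandwich (TT m) l (m+3) = 0 :=
  sandwich_zero_of _ _ _ (by
    rw [TT_3, map_add, map_smul, map_smul, PiH_eb, PiH_eb, if_neg h1, if_neg h2]
    simp)

lemma norm_sandw_3a (m : ℕ) :
    ‖sandwich (TT m) m (m+3)‖ = Real.sqrt (m+3) * Real.sqrt (m+2) * Real.sqrt (m+1) := by
  rw [sandwich_norm_of_PiH _ _ _
      ((Real.sqrt (m+3) * Real.sqrt (m+2) * Real.sqrt (m+1) : ℝ) : ℂ) (by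
    rw [TT_3, map_add, map_smul, map_smul, PiH_eb, PiH_eb, if_pos rfl, if_neg (by omega)]
    simp)]
  rw [Complex.norm_real, Real.norm_eq_abs, abs_of_nonneg (by positivity)]

lemma norm_sandw_3b (m : ℕ) :
    ‖sandwich (TT m) (m+2) (m+3)‖ = Real.sqrt (m+3) * Real.sqrt (m+2) * Real.sqrt (m+2) := by
  rw [sandwich_norm_of_PiH _ _ _
      ((Real.sqrt (m+3) * Real.sqrt (m+2) * Real.sqrt (m+2) : ℝ) : ℂ) (by
    rw [TT_3, map_add, map_smul, map_smul, PiH_eb, PiH_eb, if_neg (by omega), if_pos rfl]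
    simp)]
  rw [Complex.norm_real, Real.norm_eq_abs, abs_of_nonneg (by positivity)]

lemma sandw_low (m l s : ℕ) (hs : s ≤ m) : sandwich (TT m) l s = 0 :=
  norm_sandwich_zero _ _ _ (TT_low m s hs)

lemma sandw_high (m l s : ℕ) (hs : m + 4 ≤ s) : sandwich (TT m) l s = 0 :=
  norm_sandwich_zero _ _ _ (TT_high m s hs)

lemma sqrt_le_m3 (m : ℕ) (x : ℝ) (h : x ≤ (m:ℝ)+3) : Real.sqrt x ≤ (m:ℝ)+3 := by
  calc Real.sqrt x ≤ Real.sqrt (((m:ℝ)+3)^2) := Real.sqrt_le_sqrt (by nlinarith)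
  _ = (m:ℝ)+3 := Real.sqrt_sq (by positivity)

lemma mul3_le (a b c d : ℝ) (ha : 0 ≤ a) (hb : 0 ≤ b) (hc : 0 ≤ c)
    (h1 : a ≤ d) (h2 : b ≤ d) (h3 : c ≤ d) : a * b * c ≤ d ^ 3 := by
  have hd : 0 ≤ d := le_trans ha h1
  calc a*b*c ≤ d*d*d :=
    mul_le_mul (mul_le_mul h1 h2 hb hd) h3 hc (by positivity)
  _ = d^3 := by ring

lemma sandw_bound (m l s : ℕ) : ‖sandwich (TT m) l s‖ ≤ ((m:ℝ)+3)^3 := by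
  have h3 : (0:ℝ) ≤ (m:ℝ)+3 := by positivity
  have h1 : (1:ℝ) ≤ (m:ℝ)+3 := by linarith [Nat.cast_nonneg (α := ℝ) m]
  have s1 : Real.sqrt ((m:ℝ)+1) ≤ (m:ℝ)+3 := sqrt_le_m3 m _ (by linarith)
  have s2 : Real.sqrt ((m:ℝ)+2) ≤ (m:ℝ)+3 := sqrt_le_m3 m _ (by linarith)
  have s3 : Real.sqrt ((m:ℝ)+3) ≤ (m:ℝ)+3 := sqrt_le_m3 m _ (by linarith)
  have n1 := Real.sqrt_nonneg ((m:ℝ)+1)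
  have n2 := Real.sqrt_nonneg ((m:ℝ)+2)
  have n3 := Real.sqrt_nonneg ((m:ℝ)+3)
  rcases (show s ≤ m ∨ s = m+1 ∨ s = m+2 ∨ s = m+3 ∨ m+4 ≤ s by omega) with h|h|h|h|h
  · rw [sandw_low m l s h, norm_zero]; positivity
  · subst h
    rcases eq_or_ne l (m+2) with hl|hl
    · subst hl
      rw [norm_sandw_1]
      calc ((m:ℝ)+3) * Real.sqrt ((m:ℝ)+2) = ((m:ℝ)+3) * Real.sqrt ((m:ℝ)+2) * 1 := by ring
      _ ≤ _ := mul3_le _ _ _ _ h3 n2 zero_le_one le_rfl s2 h1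
    · rw [sandw_1 m l, if_neg hl, norm_zero]; positivity
  · subst h
    rcases eq_or_ne l (m+1) with hl|hl
    · subst hl
      rw [norm_sandw_2]
      calc ((m:ℝ)+3) * Real.sqrt ((m:ℝ)+2) = ((m:ℝ)+3) * Real.sqrt ((m:ℝ)+2) * 1 := by ring
      _ ≤ _ := mul3_le _ _ _ _ h3 n2 zero_le_one le_rfl s2 h1
    · rw [sandw_2 m l hl, norm_zero]; positivity
  · subst h
    rcases eq_or_ne l m with hl|hl
    · subst hl
      rw [norm_sandw_3a]
      exact mul3_le _ _ _ _ n3 n2 n1 s3 s2 s1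
    · rcases eq_or_ne l (m+2) with hl2|hl2
      · subst hl2
        rw [norm_sandw_3b]
        exact mul3_le _ _ _ _ n3 n2 n2 s3 s2 s2
      · rw [sandw_3 m l hl hl2, norm_zero]; positivity
  · rw [sandw_high m l s h, norm_zero]; positivity

lemma semin_eq (f : ℝ → ℝ) (k m : ℕ) :
    semin f k (TT m) =
      ∑ l ∈ ({m, m+1, m+2} : Finset ℕ), ∑ s ∈ ({m+1, m+2, m+3} : Finset ℕ),
        ENNReal.ofReal (f l * (s:ℝ)^k * ‖sandwich (TT m) l s‖) := by
  rw [semin]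
  have hinner : ∀ l : ℕ,
      (∑' s : ℕ, ENNReal.ofReal (f l * (s:ℝ)^k * ‖sandwich (TT m) l s‖)) =
      ∑ s ∈ ({m+1, m+2, m+3} : Finset ℕ),
        ENNReal.ofReal (f l * (s:ℝ)^k * ‖sandwich (TT m) l s‖) := by
    intro l
    refine tsum_eq_sum ?_
    intro s hs
    have hs' : s ≤ m ∨ m + 4 ≤ s := by
      simp only [Finset.mem_insert, Finset.mem_singleton] at hs; omega
    rcases hs' with h | h
    · rw [sandw_low m l s h, norm_zero, mul_zero, ENNReal.ofReal_zero]
    · rw [sandw_high m l s h, norm_zero, mul_zero, ENNReal.ofReal_zero]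
  calc (∑' (l : ℕ) (s : ℕ), ENNReal.ofReal (f l * (s:ℝ)^k * ‖sandwich (TT m) l s‖))
      = ∑' l : ℕ, ∑ s ∈ ({m+1, m+2, m+3} : Finset ℕ),
        ENNReal.ofReal (f l * (s:ℝ)^k * ‖sandwich (TT m) l s‖) := tsum_congr hinner
    _ = _ := by
        refine tsum_eq_sum ?_
        intro l hl
        have hl' : l ≠ m ∧ l ≠ m + 1 ∧ l ≠ m + 2 := by
          simp only [Finset.mem_insert, Finset.mem_singleton] at hl; tauto
        refine Finset.sum_eq_zero ?_
        intro s hs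
        have hs' : s = m+1 ∨ s = m+2 ∨ s = m+3 := by
          simp only [Finset.mem_insert, Finset.mem_singleton] at hs; tauto
        rcases hs' with h | h | h <;> subst h
        · rw [sandw_1 m l, if_neg hl'.2.2, norm_zero, mul_zero, ENNReal.ofReal_zero]
        · rw [sandw_2 m l hl'.2.1, norm_zero, mul_zero, ENNReal.ofReal_zero]
        · rw [sandw_3 m l hl'.1 hl'.2.2, norm_zero, mul_zero, ENNReal.ofReal_zero]

lemma term_le (f : ℝ → ℝ) (hf : IsC f) (k m l s : ℕ) (hs : (s:ℝ) ≤ (m:ℝ)+3) :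
    ENNReal.ofReal (f l * (s:ℝ)^k * ‖sandwich (TT m) l s‖) ≤
      ENNReal.ofReal (f l * ((m:ℝ)+3)^(k+3)) := by
  refine ENNReal.ofReal_le_ofReal ?_
  have hfl : 0 ≤ f l := (hf.pos l (Set.mem_Ici.mpr (by positivity))).le
  have hb := sandw_bound m l s
  calc f l * (s:ℝ)^k * ‖sandwich (TT m) l s‖
      ≤ f l * ((m:ℝ)+3)^k * ((m:ℝ)+3)^3 := by
        have h1 : (s:ℝ)^k ≤ ((m:ℝ)+3)^k := pow_le_pow_left₀ (by positivity) hs k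
        have h3 : 0 ≤ f l * ((m:ℝ)+3)^k := by positivity
        exact mul_le_mul (mul_le_mul le_rfl h1 (by positivity) hfl) hb (norm_nonneg _) h3
    _ = f l * ((m:ℝ)+3)^(k+3) := by rw [pow_add]; ring

lemma semin_le (f : ℝ → ℝ) (hf : IsC f) (k m : ℕ) :
    semin f k (TT m) ≤
      3 * ENNReal.ofReal (f m * ((m:ℝ)+3)^(k+3))
        + 3 * ENNReal.ofReal (f (m+1) * ((m:ℝ)+3)^(k+3))
        + 3 * ENNReal.ofReal (f (m+2) * ((m:ℝ)+3)^(k+3)) := by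
  rw [semin_eq]
  have inner_le : ∀ l : ℕ,
      (∑ s ∈ ({m+1, m+2, m+3} : Finset ℕ),
        ENNReal.ofReal (f l * (s:ℝ)^k * ‖sandwich (TT m) l s‖)) ≤
      3 * ENNReal.ofReal (f l * ((m:ℝ)+3)^(k+3)) := by
    intro l
    calc (∑ s ∈ ({m+1, m+2, m+3} : Finset ℕ),
        ENNReal.ofReal (f l * (s:ℝ)^k * ‖sandwich (TT m) l s‖))
        ≤ ∑ _s ∈ ({m+1, m+2, m+3} : Finset ℕ),
          ENNReal.ofReal (f l * ((m:ℝ)+3)^(k+3)) := by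
          refine Finset.sum_le_sum ?_
          intro s hs
          have : s = m+1 ∨ s = m+2 ∨ s = m+3 := by
            simp only [Finset.mem_insert, Finset.mem_singleton] at hs; tauto
          refine term_le f hf k m l s ?_
          rcases this with h | h | h <;> subst h <;> push_cast <;> linarith
      _ = 3 * ENNReal.ofReal (f l * ((m:ℝ)+3)^(k+3)) := by
          rw [Finset.sum_const, show ({m+1, m+2, m+3} : Finset ℕ).card = 3 by
            rw [Finset.card_insert_of_notMem (by simp), Finset.card_insert_of_notMem (by simp),
              Finset.card_singleton]]
          simp [nsmul_eq_mul]
  calc (∑ l ∈ ({m, m+1, m+2} : Finset ℕ), ∑ s ∈ ({m+1, m+2, m+3} : Finset ℕ),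
        ENNReal.ofReal (f l * (s:ℝ)^k * ‖sandwich (TT m) l s‖))
      ≤ ∑ l ∈ ({m, m+1, m+2} : Finset ℕ), 3 * ENNReal.ofReal (f l * ((m:ℝ)+3)^(k+3)) :=
        Finset.sum_le_sum fun l _ => inner_le l
    _ = _ := by
        rw [Finset.sum_insert (by simp), Finset.sum_insert (by simp), Finset.sum_singleton]
        push_cast
        ring

lemma real_tend (f : ℝ → ℝ) (hf : IsC f) (k : ℕ) (c : ℝ) (hc : 0 ≤ c) :
    Tendsto (fun n : ℕ => f ((n:ℝ)+c) * ((n:ℝ)+3)^(k+3)) atTop (nhds 0) := by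
  have hcomp : Tendsto (fun n : ℕ => ((n:ℝ)+c)) atTop atTop :=
    tendsto_atTop_add_const_right _ _ tendsto_natCast_atTop_atTop
  have A : Tendsto (fun n : ℕ => ((n:ℝ)+c)^(k+3) * f ((n:ℝ)+c)) atTop (nhds 0) :=
    (hf.decay (k+3)).comp hcomp
  have B : Tendsto (fun n : ℕ => 3^(k+3) * (((n:ℝ)+c)^(k+3) * f ((n:ℝ)+c))) atTop (nhds 0) := by
    simpa using A.const_mul ((3:ℝ)^(k+3))
  refine squeeze_zero' ?_ ?_ B
  · filter_upwards with n
    have : (0:ℝ) ≤ f ((n:ℝ)+c) := (hf.pos _ (Set.mem_Ici.mpr (by positivity))).le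
    positivity
  · filter_upwards [eventually_ge_atTop 2] with n hn
    have hn' : (2:ℝ) ≤ (n:ℝ) := by exact_mod_cast hn
    have hfp : (0:ℝ) ≤ f ((n:ℝ)+c) := (hf.pos _ (Set.mem_Ici.mpr (by positivity))).le
    have hb : ((n:ℝ)+3)^(k+3) ≤ 3^(k+3) * ((n:ℝ)+c)^(k+3) := by
      rw [← mul_pow]
      exact pow_le_pow_left₀ (by linarith) (by linarith) _
    calc f ((n:ℝ)+c) * ((n:ℝ)+3)^(k+3)
        ≤ f ((n:ℝ)+c) * (3^(k+3) * ((n:ℝ)+c)^(k+3)) := by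
          exact mul_le_mul_of_nonneg_left hb hfp
      _ = 3^(k+3) * (((n:ℝ)+c)^(k+3) * f ((n:ℝ)+c)) := by ring

lemma enn_tend (f : ℝ → ℝ) (hf : IsC f) (k : ℕ) (c : ℝ) (hc : 0 ≤ c) :
    Tendsto (fun n : ℕ => ENNReal.ofReal (f ((n:ℝ)+c) * ((n:ℝ)+3)^(k+3))) atTop (nhds 0) := by
  have := ENNReal.tendsto_ofReal (real_tend f hf k c hc)
  simpa using this


/-- for every `f ∈ 𝒞` and `k ∈ ℕ`, the seminorm of the second multiple
commutator `[X_L, a]₂` (with `X_L = a Q_L + a† Q_{L-1}`) tends to zero as `L → ∞`. -/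
theorem stmt15 (f : ℝ → ℝ) (hf : IsC f) (k : ℕ) :
    Tendsto
      (fun L : ℕ =>
        semin f k (incl ∘ₗ itComm (aOp * QD L + adOp * QD (L - 1)) aOp 2))
      atTop (nhds 0) := by
  rw [← Filter.tendsto_add_atTop_iff_nat 2]
  show Tendsto (fun n : ℕ => semin f k (TT n)) atTop (nhds 0)
  have h0 := enn_tend f hf k 0 le_rfl
  have h1 := enn_tend f hf k 1 zero_le_one
  have h2 := enn_tend f hf k 2 (by norm_num)
  simp only [add_zero] at h0
  have G0 : Tendsto (fun n : ℕ =>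
      3 * ENNReal.ofReal (f n * ((n:ℝ)+3)^(k+3))
        + 3 * ENNReal.ofReal (f (n+1) * ((n:ℝ)+3)^(k+3))
        + 3 * ENNReal.ofReal (f (n+2) * ((n:ℝ)+3)^(k+3))) atTop (nhds 0) := by
    have t0 := ENNReal.Tendsto.const_mul h0 (Or.inr (show (3:ℝ≥0∞) ≠ ⊤ by norm_num))
    have t1 := ENNReal.Tendsto.const_mul h1 (Or.inr (show (3:ℝ≥0∞) ≠ ⊤ by norm_num))
    have t2 := ENNReal.Tendsto.const_mul h2 (Or.inr (show (3:ℝ≥0∞) ≠ ⊤ by norm_num))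
    simp only [mul_zero] at t0 t1 t2
    have := (t0.add t1).add t2
    simpa using this
  refine tendsto_of_tendsto_of_tendsto_of_le_of_le tendsto_const_nhds G0
    (fun n => zero_le) (fun n => ?_)
  have := semin_le f hf k n
  convert this using 3 <;> push_cast <;> ring

end
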